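/- arXiv:1205.4365 — 7 statements merged into one kernel-verified Lean document; each statement's English description precedes it below -/
import Mathlib

section
/- Let (G₂, G₁, ∂) be a pre-crossed module and V ⊆ G₂ a generating set of G₂ that is invariant under the G₁-action. Then the Peiffer subgroup P equals the normal closure in G₂ of the set of Peiffer commutators ⟨a,b⟩ with a, b ∈ V. -/
/-!
Write `N` for the normal closure of the Peiffer commutators of elements of `V`. The Peiffer
subgroup is stable under the action, since `⟨a, b⟩` is equivariant, hence normal, because
`g n g⁻¹ = ⟨g, n⟩ · ᵈ⁽ᵍ⁾n`; so it contains `N`. Conversely, `⟨a, b⟩` obeys product rules in each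
variable up to conjugation and the action, so membership in `N` propagates from generators to
all of `G₂`: in `b` by normality of `N`, then in `a` because `N` inherits stability under the
action from `V`.
-/

namespace Subgroup

variable {G : Type*} [Group G] {S : Set G} (σ : G ≃* G)

theorem apply_mem_normalClosure (hS : ∀ s ∈ S, σ s ∈ S) {x : G} (hx : x ∈ normalClosure S) :
    σ x ∈ normalClosure S := by
  have hmap : (normalClosure S).map (σ : G →* G) ≤ normalClosure S := by
    rw [map_normalClosure _ _ σ.surjective]
    exact normalClosure_mono (by rintro _ ⟨s, hs, rfl⟩; exact hS s hs)
  exact hmap ⟨x, hx, rfl⟩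

theorem apply_mem_closure (hS : ∀ s ∈ S, σ s ∈ S) {x : G} (hx : x ∈ closure S) :
    σ x ∈ closure S := by
  have hmap : (closure S).map (σ : G →* G) ≤ closure S := by
    rw [MonoidHom.map_closure]
    exact closure_mono (by rintro _ ⟨s, hs, rfl⟩; exact hS s hs)
  exact hmap ⟨x, hx, rfl⟩

end Subgroup

namespace PreCrossedModule

variable {G₁ G₂ : Type*} [Group G₁] [Group G₂] (φ : G₁ →* MulAut G₂) (d : G₂ →* G₁)

def peifferCommutator (a b : G₂) : G₂ := a * b * a⁻¹ * (φ (d a) b)⁻¹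

def peifferSubgroup : Subgroup G₂ :=
  Subgroup.closure {z | ∃ a b, z = peifferCommutator φ d a b}

theorem map_peifferCommutator (hd : ∀ g₁ g₂, d (φ g₁ g₂) = g₁ * d g₂ * g₁⁻¹) (g : G₁) (a b : G₂) :
    φ g (peifferCommutator φ d a b) = peifferCommutator φ d (φ g a) (φ g b) := by
  simp [peifferCommutator, hd, MulAut.mul_apply, MulAut.inv_def]

theorem peifferCommutator_mul_right (a b c : G₂) :
    peifferCommutator φ d a (b * c) =
      peifferCommutator φ d a b *
        (φ (d a) b * peifferCommutator φ d a c * (φ (d a) b)⁻¹) := by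
  simp only [peifferCommutator, map_mul]
  group

theorem peifferCommutator_inv_right (a b : G₂) :
    peifferCommutator φ d a b⁻¹ =
      (φ (d a) b)⁻¹ * (peifferCommutator φ d a b)⁻¹ * φ (d a) b := by
  simp only [peifferCommutator, map_inv]
  group

theorem peifferCommutator_mul_left (a b c : G₂) :
    peifferCommutator φ d (a * b) c =
      peifferCommutator φ d a (b * c * b⁻¹) * φ (d a) (peifferCommutator φ d b c) := by
  simp only [peifferCommutator, map_mul, map_inv, MulAut.mul_apply]
  group

theorem peifferCommutator_inv_left (a c : G₂) :
    peifferCommutator φ d a⁻¹ c =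
      φ (d a⁻¹) (peifferCommutator φ d a (a⁻¹ * c * a))⁻¹ := by
  simp only [peifferCommutator, map_mul, map_inv, MulAut.inv_def, MulEquiv.symm_apply_apply]
  group

theorem peifferSubgroup_normal (hd : ∀ g₁ g₂, d (φ g₁ g₂) = g₁ * d g₂ * g₁⁻¹) :
    (peifferSubgroup φ d).Normal where
  conj_mem n hn g := by
    have hcomm : peifferCommutator φ d g n ∈ peifferSubgroup φ d :=
      Subgroup.subset_closure ⟨g, n, rfl⟩
    have hact : φ (d g) n ∈ peifferSubgroup φ d :=
      Subgroup.apply_mem_closure _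
        (by rintro _ ⟨a, b, rfl⟩; exact ⟨_, _, map_peifferCommutator φ d hd _ a b⟩) hn
    simpa [peifferCommutator] using mul_mem hcomm hact

variable {φ d}

theorem peifferCommutator_mem_of_mem_closure_right {N : Subgroup G₂} (hN : N.Normal)
    {V : Set G₂} {a : G₂} (hV : ∀ v ∈ V, peifferCommutator φ d a v ∈ N) {b : G₂}
    (hb : b ∈ Subgroup.closure V) : peifferCommutator φ d a b ∈ N := by
  induction hb using Subgroup.closure_induction with
  | mem v hv => exact hV v hv
  | one => simp [peifferCommutator]
  | mul x y _ _ hx hy =>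
    rw [peifferCommutator_mul_right]
    exact N.mul_mem hx (hN.conj_mem _ hy _)
  | inv x _ hx =>
    rw [peifferCommutator_inv_right]
    simpa using hN.conj_mem _ (N.inv_mem hx) (φ (d a) x)⁻¹

theorem peifferCommutator_mem_of_mem_closure_left {N : Subgroup G₂}
    (hN : ∀ g, ∀ x ∈ N, φ g x ∈ N) {V : Set G₂}
    (hV : ∀ v ∈ V, ∀ b, peifferCommutator φ d v b ∈ N) {a : G₂}
    (ha : a ∈ Subgroup.closure V) (b : G₂) : peifferCommutator φ d a b ∈ N := by
  induction ha using Subgroup.closure_induction generalizing b with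
  | mem v hv => exact hV v hv b
  | one => simp [peifferCommutator]
  | mul x y _ _ hx hy =>
    rw [peifferCommutator_mul_left]
    exact N.mul_mem (hx _) (hN _ _ (hy b))
  | inv x _ hx =>
    rw [peifferCommutator_inv_left]
    exact hN _ _ (N.inv_mem (hx _))

end PreCrossedModule

/-- Let `(G₂, G₁, d)` be a pre-crossed module and `V ⊆ G₂` a generating set of `G₂`
invariant under the `G₁`-action.  Then the Peiffer subgroup (the subgroup generated
by all Peiffer commutators `⟨a,b⟩ = a b a⁻¹ (^{d(a)}b)⁻¹`) equals the normal closure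
in `G₂` of the set of Peiffer commutators `⟨a,b⟩` with `a, b ∈ V`. -/
theorem stmt10 (G₁ G₂ : Type) [Group G₁] [Group G₂]
    (φ : G₁ →* MulAut G₂) (d : G₂ →* G₁)
    (cm1 : ∀ (g₁ : G₁) (g₂ : G₂), d (φ g₁ g₂) = g₁ * d g₂ * g₁⁻¹)
    (V : Set G₂) (hV : Subgroup.closure V = ⊤)
    (hVinv : ∀ g : G₁, ∀ v ∈ V, φ g v ∈ V) :
    Subgroup.closure {z : G₂ | ∃ a b : G₂, z = a * b * a⁻¹ * (φ (d a) b)⁻¹}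
      = Subgroup.normalClosure
          {z : G₂ | ∃ a ∈ V, ∃ b ∈ V, z = a * b * a⁻¹ * (φ (d a) b)⁻¹} := by
  open PreCrossedModule in
  set N := Subgroup.normalClosure
    {z : G₂ | ∃ a ∈ V, ∃ b ∈ V, z = peifferCommutator φ d a b}
  have hN_stable : ∀ g, ∀ x ∈ N, φ g x ∈ N := fun g _ ↦
    Subgroup.apply_mem_normalClosure _ <| by
      rintro _ ⟨a, ha, b, hb, rfl⟩
      exact ⟨_, hVinv g a ha, _, hVinv g b hb, map_peifferCommutator φ d cm1 g a b⟩
  have hN_generators : ∀ v ∈ V, ∀ b, peifferCommutator φ d v b ∈ N := fun v hv b ↦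
    peifferCommutator_mem_of_mem_closure_right Subgroup.normalClosure_normal
      (fun w hw ↦ Subgroup.subset_normalClosure (by exact ⟨v, hv, w, hw, rfl⟩))
      (hV ▸ Subgroup.mem_top b)
  refine le_antisymm ?_ ?_
  · rw [Subgroup.closure_le]
    rintro _ ⟨a, b, rfl⟩
    exact peifferCommutator_mem_of_mem_closure_left hN_stable hN_generators
      (hV ▸ Subgroup.mem_top a) b
  · show _ ≤ peifferSubgroup φ d
    have := peifferSubgroup_normal φ d cm1
    refine Subgroup.normalClosure_le_normal ?_
    rintro _ ⟨a, -, b, -, rfl⟩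
    exact Subgroup.subset_closure ⟨a, b, rfl⟩
end

section
/- In a group G₁ with two elements x, y, the Peiffer commutator ⟨x,y⟩ = x y x⁻¹ (^{∂x}y)⁻¹, after the substitution x ↦ x⁻¹, y ↦ x⁻¹ y⁻¹ x, satisfies ⟨x⁻¹, x⁻¹y⁻¹x⟩ = [x⁻¹ · s(∂(x)), y], where s denotes the section and the action is by conjugation by s(∂(·)); consequently the Peiffer subgroup of the pre-crossed module (ker d₀, F₀, d₁) arising from a simplicial group level is generated by commutators [x⁻¹ s₀(d₁(x)), y]. -/
/-! The substitution `(x, y) ↦ (x⁻¹, x y⁻¹ x⁻¹)` preserves pairs in `ker d₀` and is an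
involution, and it turns each Peiffer commutator into the inverse of a commutator
`[x⁻¹ s₀(d₁ x), y]`. Hence the two generating sets are inverse to each other and generate
the same subgroup. -/

section PeifferCommutator

variable {G : Type*} [Group G] (σ : G →* G)

/-- `σ` stands for `s₀ ∘ d₁`, so `σ x * y * (σ x)⁻¹` is the action of `∂x` on `y`. -/
def peifferCommutator (x y : G) : G :=
  x * y * x⁻¹ * (σ x * y * (σ x)⁻¹)⁻¹

theorem peifferCommutator_inv_conj (x y : G) :
    peifferCommutator σ x⁻¹ (x * y⁻¹ * x⁻¹)
      = ((x⁻¹ * σ x)⁻¹ * y⁻¹ * (x⁻¹ * σ x) * y)⁻¹ := by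
  simp only [peifferCommutator, map_inv]
  group

theorem peifferCommutator_eq_inv (x y : G) :
    peifferCommutator σ x y
      = ((x * σ x⁻¹)⁻¹ * (x * y⁻¹ * x⁻¹)⁻¹ * (x * σ x⁻¹) * (x * y⁻¹ * x⁻¹))⁻¹ := by
  simpa using peifferCommutator_inv_conj σ x⁻¹ (x * y⁻¹ * x⁻¹)

theorem peifferCommutator_set_eq_inv (K : Subgroup G) :
    {z | ∃ x ∈ K, ∃ y ∈ K, z = peifferCommutator σ x y}
      = {z | ∃ x ∈ K, ∃ y ∈ K, z = (x⁻¹ * σ x)⁻¹ * y⁻¹ * (x⁻¹ * σ x) * y}⁻¹ := by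
  have conj_mem {x y : G} (hx : x ∈ K) (hy : y ∈ K) : x * y⁻¹ * x⁻¹ ∈ K :=
    mul_mem (mul_mem hx (inv_mem hy)) (inv_mem hx)
  ext z
  simp only [Set.mem_ofPred_eq, Set.mem_inv]
  constructor
  · rintro ⟨x, hx, y, hy, rfl⟩
    refine ⟨x⁻¹, inv_mem hx, x * y⁻¹ * x⁻¹, conj_mem hx hy, ?_⟩
    rw [peifferCommutator_eq_inv, inv_inv, inv_inv]
  · rintro ⟨x, hx, y, hy, hz⟩
    refine ⟨x⁻¹, inv_mem hx, x * y⁻¹ * x⁻¹, conj_mem hx hy, ?_⟩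
    rw [peifferCommutator_inv_conj, ← hz, inv_inv]

theorem closure_peifferCommutator_eq (K : Subgroup G) :
    Subgroup.closure {z | ∃ x ∈ K, ∃ y ∈ K, z = peifferCommutator σ x y}
      = Subgroup.closure
          {z | ∃ x ∈ K, ∃ y ∈ K, z = (x⁻¹ * σ x)⁻¹ * y⁻¹ * (x⁻¹ * σ x) * y} := by
  rw [peifferCommutator_set_eq_inv, Subgroup.closure_inv]

end PeifferCommutator

theorem stmt11_general (F₀ F₁ : Type) [Group F₀] [Group F₁]
    (d₀ d₁ : F₁ →* F₀) (s₀ : F₀ →* F₁) :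
    (∀ x y : F₁,
      x⁻¹ * (x * y⁻¹ * x⁻¹) * (x⁻¹)⁻¹ *
          (s₀ (d₁ x⁻¹) * (x * y⁻¹ * x⁻¹) * (s₀ (d₁ x⁻¹))⁻¹)⁻¹
        = ((x⁻¹ * s₀ (d₁ x))⁻¹ * y⁻¹ * (x⁻¹ * s₀ (d₁ x)) * y)⁻¹) ∧
    Subgroup.closure
        {z : F₁ | ∃ x ∈ d₀.ker, ∃ y ∈ d₀.ker,
          z = x * y * x⁻¹ * (s₀ (d₁ x) * y * (s₀ (d₁ x))⁻¹)⁻¹}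
      = Subgroup.closure
          {z : F₁ | ∃ x ∈ d₀.ker, ∃ y ∈ d₀.ker,
            z = (x⁻¹ * s₀ (d₁ x))⁻¹ * y⁻¹ * (x⁻¹ * s₀ (d₁ x)) * y} :=
  ⟨peifferCommutator_inv_conj (s₀.comp d₁), closure_peifferCommutator_eq (s₀.comp d₁) d₀.ker⟩

/-- At the bottom of a simplicial group (level `F₁` over `F₀`, faces `d₀ d₁`,
degeneracy `s₀` with `d₀ s₀ = d₁ s₀ = id`), `F₀` acts on `ker d₀` by
`ᵍx = s₀(g) x s₀(g)⁻¹` and `∂ = d₁` gives a pre-crossed module.  Writing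
`⟨x,y⟩ = x y x⁻¹ (s₀(d₁ x) y s₀(d₁ x)⁻¹)⁻¹` for the Peiffer commutator and
`[a,b] = a⁻¹ b⁻¹ a b` for the commutator, the substitution `x ↦ x⁻¹`,
`y ↦ ˣ(y⁻¹)` turns a Peiffer commutator into (the inverse of) a commutator
`[x⁻¹ · s₀(d₁ x), y]`; consequently the Peiffer subgroup of the pre-crossed
module `(ker d₀, F₀, d₁)` is generated by the commutators
`[x⁻¹ s₀(d₁ x), y]` with `x, y ∈ ker d₀`. -/
theorem stmt11 (F₀ F₁ : Type) [Group F₀] [Group F₁]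
    (d₀ d₁ : F₁ →* F₀) (s₀ : F₀ →* F₁)
    (hs₀d₀ : ∀ g : F₀, d₀ (s₀ g) = g) (hs₀d₁ : ∀ g : F₀, d₁ (s₀ g) = g) :
    (∀ x y : F₁,
      x⁻¹ * (x * y⁻¹ * x⁻¹) * (x⁻¹)⁻¹ *
          (s₀ (d₁ x⁻¹) * (x * y⁻¹ * x⁻¹) * (s₀ (d₁ x⁻¹))⁻¹)⁻¹
        = ((x⁻¹ * s₀ (d₁ x))⁻¹ * y⁻¹ * (x⁻¹ * s₀ (d₁ x)) * y)⁻¹) ∧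
    Subgroup.closure
        {z : F₁ | ∃ x ∈ d₀.ker, ∃ y ∈ d₀.ker,
          z = x * y * x⁻¹ * (s₀ (d₁ x) * y * (s₀ (d₁ x))⁻¹)⁻¹}
      = Subgroup.closure
          {z : F₁ | ∃ x ∈ d₀.ker, ∃ y ∈ d₀.ker,
            z = (x⁻¹ * s₀ (d₁ x))⁻¹ * y⁻¹ * (x⁻¹ * s₀ (d₁ x)) * y} :=
  stmt11_general F₀ F₁ d₀ d₁ s₀
end

section
/- Let G be a simplicial group. For x, y ∈ NG₁ = ker d₀ ⊆ G₁ define the Peiffer lifting {x,y} = [s₀x, s₁y]·[s₁y, s₁x] ∈ G₂. Then d₀{x,y} = d₁{x,y} = 1 and d₂{x,y} = ⟨x,y⟩, where ⟨x,y⟩ = x y x⁻¹ (s₀(d₁ x) y s₀(d₁ x)⁻¹)⁻¹ is the Peiffer commutator. Consequently every Peiffer commutator lies in d₂(NG₂). -/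
/-!
The simplicial identities compute every face of `{x,y} = ⁅s₁x, s₁y⁆⁅s₁y, s₀x⁆`:
`d₀` turns both `s₁`-factors into `s₀d₀ = 1` (as `x, y ∈ ker d₀`) and kills it,
`d₁` sends both `s₀` and `s₁` to the identity and leaves `⁅x, y⁆⁅y, x⁆ = 1`, and
`d₂` replaces `s₀x` by `s₀d₁x`, which leaves exactly the Peiffer commutator.
-/

open CategoryTheory Simplicial
open scoped commutatorElement

namespace CategoryTheory.SimplicialObject

section Apply

variable {C : Type*} [Category C] {F : C → C → Type*} {CC : C → Type*}
  [∀ X Y, FunLike (F X Y) (CC X) (CC Y)] [ConcreteCategory C F] (X : SimplicialObject C)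

lemma δ_σ_apply_of_le {n : ℕ} {i : Fin (n + 2)} {j : Fin (n + 1)} (H : i ≤ j.castSucc)
    (a : ToType (X _⦋n + 1⦌)) : X.δ i.castSucc (X.σ j.succ a) = X.σ j (X.δ i a) := by
  simpa using ConcreteCategory.congr_hom (X.δ_comp_σ_of_le H) a

lemma δ_σ_apply_self {n : ℕ} {j : Fin (n + 2)} {i : Fin (n + 1)} (H : j = i.castSucc)
    (a : ToType (X _⦋n⦌)) : X.δ j (X.σ i a) = a := by
  simpa using ConcreteCategory.congr_hom (X.δ_comp_σ_self' H) a

lemma δ_σ_apply_succ {n : ℕ} {j : Fin (n + 2)} {i : Fin (n + 1)} (H : j = i.succ)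
    (a : ToType (X _⦋n⦌)) : X.δ j (X.σ i a) = a := by
  simpa using ConcreteCategory.congr_hom (X.δ_comp_σ_succ' H) a

lemma δ_σ_apply_of_gt {n : ℕ} {i : Fin (n + 2)} {j : Fin (n + 1)} (H : j.castSucc < i)
    (a : ToType (X _⦋n + 1⦌)) : X.δ i.succ (X.σ j.castSucc a) = X.σ j (X.δ i a) := by
  simpa using ConcreteCategory.congr_hom (X.δ_comp_σ_of_gt H) a

variable (a : ToType (X _⦋1⦌))

lemma δ_zero_σ_one_apply : X.δ 0 (X.σ 1 a) = X.σ 0 (X.δ 0 a) :=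
  X.δ_σ_apply_of_le (i := 0) (j := 0) le_rfl a

lemma δ_zero_σ_zero_apply : X.δ 0 (X.σ 0 a) = a := X.δ_σ_apply_self (i := 0) rfl a

lemma δ_one_σ_zero_apply : X.δ 1 (X.σ 0 a) = a := X.δ_σ_apply_succ (i := 0) rfl a

lemma δ_one_σ_one_apply : X.δ 1 (X.σ 1 a) = a := X.δ_σ_apply_self (i := 1) rfl a

lemma δ_two_σ_one_apply : X.δ 2 (X.σ 1 a) = a := X.δ_σ_apply_succ (i := 1) rfl a

lemma δ_two_σ_zero_apply : X.δ 2 (X.σ 0 a) = X.σ 0 (X.δ 1 a) :=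
  X.δ_σ_apply_of_gt (i := 1) (j := 0) (by decide) a

end Apply

section Peiffer

variable (X : SimplicialObject GrpCat)

/-- With `⁅a, b⁆ = a b a⁻¹ b⁻¹` this is the inverse of `[s₀x, s₁y][s₁y, s₁x]`. -/
def peifferLifting (x y : X _⦋1⦌) : X _⦋2⦌ :=
  ⁅X.σ 1 x, X.σ 1 y⁆ * ⁅X.σ 1 y, X.σ 0 x⁆

def peifferCommutator (x y : X _⦋1⦌) : X _⦋1⦌ :=
  x * y * x⁻¹ * (X.σ 0 (X.δ 1 x) * y * (X.σ 0 (X.δ 1 x))⁻¹)⁻¹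

lemma δ_zero_peifferLifting {x y : X _⦋1⦌} (hx : X.δ 0 x = 1) (hy : X.δ 0 y = 1) :
    X.δ 0 (X.peifferLifting x y) = 1 := by
  simp [peifferLifting, commutatorElement_def, δ_zero_σ_one_apply, δ_zero_σ_zero_apply, hx, hy]

lemma δ_one_peifferLifting (x y : X _⦋1⦌) : X.δ 1 (X.peifferLifting x y) = 1 := by
  simp only [peifferLifting, commutatorElement_def, map_mul, map_inv, δ_one_σ_one_apply,
    δ_one_σ_zero_apply]
  group

lemma δ_two_peifferLifting (x y : X _⦋1⦌) :
    X.δ 2 (X.peifferLifting x y) = X.peifferCommutator x y := by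
  simp only [peifferLifting, peifferCommutator, commutatorElement_def, map_mul, map_inv,
    δ_two_σ_one_apply, δ_two_σ_zero_apply]
  group

end Peiffer

end CategoryTheory.SimplicialObject

/-- Peiffer lifting.  Let `X` be a simplicial group and `x, y ∈ NG₁ = ker d₀`.
The Peiffer lifting `{x,y} = [s₁x, s₁y]·[s₁y, s₀x] ∈ X₂` (with commutator
convention `⁅a,b⁆ = a b a⁻¹ b⁻¹`; this is the inverse of `[s₀x,s₁y][s₁y,s₁x]`)
satisfies `d₀{x,y} = d₁{x,y} = 1` and `d₂{x,y} = ⟨x,y⟩`, where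
`⟨x,y⟩ = x y x⁻¹ (s₀(d₁x) y s₀(d₁x)⁻¹)⁻¹` is the Peiffer commutator.
Consequently every Peiffer commutator lies in `d₂(NG₂)`. -/
theorem stmt12 (X : SimplicialObject GrpCat)
    (x y : X _⦋1⦌) (hx : X.δ (n := 0) 0 x = 1) (hy : X.δ (n := 0) 0 y = 1) :
    (X.δ (n := 1) 0 (⁅X.σ (n := 1) 1 x, X.σ (n := 1) 1 y⁆ *
        ⁅X.σ (n := 1) 1 y, X.σ (n := 1) 0 x⁆) = 1 ∧
      X.δ (n := 1) 1 (⁅X.σ (n := 1) 1 x, X.σ (n := 1) 1 y⁆ *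
        ⁅X.σ (n := 1) 1 y, X.σ (n := 1) 0 x⁆) = 1 ∧
      X.δ (n := 1) 2 (⁅X.σ (n := 1) 1 x, X.σ (n := 1) 1 y⁆ *
        ⁅X.σ (n := 1) 1 y, X.σ (n := 1) 0 x⁆)
        = x * y * x⁻¹ *
            (X.σ (n := 0) 0 (X.δ (n := 0) 1 x) * y *
              (X.σ (n := 0) 0 (X.δ (n := 0) 1 x))⁻¹)⁻¹) ∧
    (∃ z : X _⦋2⦌, X.δ (n := 1) 0 z = 1 ∧ X.δ (n := 1) 1 z = 1 ∧
      X.δ (n := 1) 2 z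
        = x * y * x⁻¹ *
            (X.σ (n := 0) 0 (X.δ (n := 0) 1 x) * y *
              (X.σ (n := 0) 0 (X.δ (n := 0) 1 x))⁻¹)⁻¹) := by
  have h₀ := X.δ_zero_peifferLifting hx hy
  have h₁ := X.δ_one_peifferLifting x y
  have h₂ := X.δ_two_peifferLifting x y
  exact ⟨⟨h₀, h₁, h₂⟩, X.peifferLifting x y, h₀, h₁, h₂⟩
end

section
/- Let G be a pro-p group, g₁, g₂ ∈ G, and suppose g₁^p = [g₁^p, g₂]. Then g₁^p = 1. -/
/-!
If `x = ⁅x, g⁆`, then `x` lies in every term of the lower central series, so its image in any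
nilpotent quotient is trivial. The quotients of a pro-`p` group by open normal subgroups are
finite `p`-groups, hence nilpotent, and these open normal subgroups intersect in `1`.
-/

/-- A profinite topological group all of whose open normal subgroups have
`p`-power index: a pro-`p` group. -/
def IsProP (p : ℕ) (G : Type) [Group G] [TopologicalSpace G]
    [IsTopologicalGroup G] : Prop :=
  CompactSpace G ∧ T2Space G ∧ TotallyDisconnectedSpace G ∧
    ∀ U : Subgroup G, U.Normal → IsOpen (U : Set G) → ∃ k : ℕ, U.index = p ^ k

open scoped commutatorElement

theorem Subgroup.mem_lowerCentralSeries_of_eq_commutatorElement {G : Type*} [Group G]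
    {S : Subgroup G} {x g : G} (hx : x ∈ S) (hg : g ∈ S) (h : x = ⁅x, g⁆) (n : ℕ) :
    x ∈ S.lowerCentralSeries n := by
  induction n with
  | zero => exact hx
  | succ n ih =>
    rw [lowerCentralSeries_succ, h]
    exact commutator_mem_commutator ih hg

theorem eq_one_of_eq_commutatorElement_of_isNilpotent {G : Type*} [Group G]
    [Group.IsNilpotent G] {x g : G} (h : x = ⁅x, g⁆) : x = 1 := by
  have hx := Subgroup.mem_lowerCentralSeries_of_eq_commutatorElement
    (Subgroup.mem_top x) (Subgroup.mem_top g) h (Group.nilpotencyClass G)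
  rwa [Subgroup.lowerCentralSeries_nilpotencyClass, Subgroup.mem_bot] at hx

theorem eq_one_of_forall_mem_openNormalSubgroup {G : Type*} [Group G] [TopologicalSpace G]
    [IsTopologicalGroup G] [CompactSpace G] [TotallyDisconnectedSpace G] [T1Space G] {x : G}
    (hx : ∀ H : OpenNormalSubgroup G, x ∈ H) : x = 1 := by
  by_contra hne
  obtain ⟨H, hH⟩ := ProfiniteGrp.exist_openNormalSubgroup_sub_open_nhds_of_one
    isOpen_compl_singleton (Set.mem_compl_singleton_iff.mpr (Ne.symm hne))
  exact hH (hx H) rfl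

theorem IsProP.isNilpotent_quotient {p : ℕ} (hp : p.Prime) {G : Type} [Group G]
    [TopologicalSpace G] [IsTopologicalGroup G] (hG : IsProP p G) (H : OpenNormalSubgroup G) :
    Group.IsNilpotent (G ⧸ H.toSubgroup) := by
  obtain ⟨k, hk⟩ := hG.2.2.2 H H.isNormal' H.isOpen'
  have : Fact p.Prime := ⟨hp⟩
  have hcard : Nat.card (G ⧸ H.toSubgroup) = p ^ k := hk
  have : Finite (G ⧸ H.toSubgroup) :=
    Nat.finite_of_card_ne_zero (hcard ▸ pow_ne_zero k hp.ne_zero)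
  exact (IsPGroup.of_card hcard).isNilpotent

theorem IsProP.eq_one_of_eq_commutatorElement {p : ℕ} (hp : p.Prime) {G : Type} [Group G]
    [TopologicalSpace G] [IsTopologicalGroup G] (hG : IsProP p G) {x g : G} (h : x = ⁅x, g⁆) :
    x = 1 := by
  have := hG.1
  have := hG.2.1
  have := hG.2.2.1
  refine eq_one_of_forall_mem_openNormalSubgroup fun H => ?_
  have := hG.isNilpotent_quotient hp H
  have hq : QuotientGroup.mk' H.toSubgroup x = 1 :=
    eq_one_of_eq_commutatorElement_of_isNilpotent (g := QuotientGroup.mk' _ g)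
      (by rw [← map_commutatorElement, ← h])
  exact (QuotientGroup.eq_one_iff x).mp hq

/-- Let `G` be a pro-`p` group and `g₁ g₂ ∈ G` with `g₁^p = [g₁^p, g₂]`.
Then `g₁^p = 1`. -/
theorem stmt14 (p : ℕ) (hp : p.Prime) (G : Type) [Group G] [TopologicalSpace G]
    [IsTopologicalGroup G] (hG : IsProP p G) (g₁ g₂ : G)
    (h : g₁ ^ p = ⁅g₁ ^ p, g₂⁆) : g₁ ^ p = 1 :=
  hG.eq_one_of_eq_commutatorElement hp h
end

section
/- Let p be prime, F a free pro-p group on x₁, x₂, and r = x₁^p [x₂, x₁^p] ∈ F with R the closed normal subgroup generated by r. Then in the quotient G = F/R the image g₁ of x₁ satisfies g₁^p = 1, and x₁^p ≡ r mod R^p[R,F]; hence x₁^p can be chosen as a defining relator, so G ≅ (Z/p) ∗̂ Z_p is the free pro-p product of a cyclic group of order p and a free pro-p group of rank 1. -/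
/-- `F` is a free pro-`p` group on the family `x`. -/
def IsFreeProPOn (p : ℕ) (F : Type) [Group F] [TopologicalSpace F]
    [IsTopologicalGroup F] {ι : Type} (x : ι → F) : Prop :=
  IsProP p F ∧
    ∀ (H : Type) (_ : Group H) (_ : TopologicalSpace H) (_ : IsTopologicalGroup H),
      IsProP p H → ∀ h : ι → H,
        ∃! φ : F →* H, Continuous φ ∧ ∀ i, φ (x i) = h i

open scoped commutatorElement

namespace Subgroup

variable {G : Type*} [Group G]

theorem conj_mem_normalClosure_singleton (g c : G) : c * g * c⁻¹ ∈ normalClosure {g} :=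
  normalClosure_normal.conj_mem g (subset_normalClosure (Set.mem_singleton g)) c

theorem normalClosure_singleton_conj (g c : G) :
    normalClosure {c * g * c⁻¹} = normalClosure {g} := by
  refine le_antisymm (normalClosure_le_normal ?_) (normalClosure_le_normal ?_) <;>
    rw [Set.singleton_subset_iff]
  · exact conj_mem_normalClosure_singleton g c
  · simpa [mul_assoc] using conj_mem_normalClosure_singleton (c * g * c⁻¹) c⁻¹

end Subgroup

theorem mul_inv_conj_eq_commutatorElement {G : Type*} [Group G] (g c : G) :
    g * (c * g * c⁻¹)⁻¹ = ⁅g, c⁆ := by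
  rw [commutatorElement_def]
  group

theorem mul_commutatorElement_eq_conj {G : Type*} [Group G] (a b : G) :
    a * ⁅b, a⁆ = (a * b) * a * (a * b)⁻¹ := by
  rw [commutatorElement_def]
  group

theorem stmt15_general (p : ℕ) (F : Type) [Group F] [TopologicalSpace F]
    [IsTopologicalGroup F] (x₁ x₂ : F)
    (r : F) (hr : r = x₁ ^ p * ⁅x₂, x₁ ^ p⁆)
    (R : Subgroup F) (hR : R = (Subgroup.normalClosure {r}).topologicalClosure) :
    x₁ ^ p ∈ R ∧
    x₁ ^ p * r⁻¹ ∈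
      (Subgroup.closure ({z : F | ∃ a ∈ R, z = a ^ p} ∪
        {z : F | ∃ a ∈ R, ∃ b : F, z = ⁅a, b⁆})).topologicalClosure ∧
    (Subgroup.normalClosure {x₁ ^ p}).topologicalClosure = R := by
  rw [mul_commutatorElement_eq_conj] at hr
  have hN : Subgroup.normalClosure {r} = Subgroup.normalClosure {x₁ ^ p} := by
    rw [hr, Subgroup.normalClosure_singleton_conj]
  have hmem : x₁ ^ p ∈ R := by
    rw [hR, hN]
    exact Subgroup.le_topologicalClosure _ (Subgroup.subset_normalClosure rfl)
  refine ⟨hmem, ?_, by rw [hR, hN]⟩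
  rw [hr, mul_inv_conj_eq_commutatorElement]
  exact Subgroup.le_topologicalClosure _ (Subgroup.subset_closure (Or.inr ⟨_, hmem, _, rfl⟩))

/-- Let `F` be the free pro-`p` group on `x₁, x₂`, `r = x₁^p·[x₂, x₁^p]` and `R` the
closed normal subgroup generated by `r`.  Then (a) the image of `x₁` in `G = F/R`
satisfies `g₁^p = 1`, i.e. `x₁^p ∈ R`; (b) `x₁^p ≡ r mod R^p[R,F]`; and (c) `x₁^p`
can be chosen as defining relator: the closed normal subgroup generated by `x₁^p`
equals `R` — so that `G` is the free pro-`p` product of a cyclic group of order `p`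
(generated by the image of `x₁`) and a free pro-`p` group of rank 1. -/
theorem stmt15 (p : ℕ) (hp : p.Prime) (F : Type) [Group F] [TopologicalSpace F]
    [IsTopologicalGroup F] (x₁ x₂ : F)
    (hF : IsFreeProPOn p F (fun i : Fin 2 => if i = 0 then x₁ else x₂))
    (r : F) (hr : r = x₁ ^ p * ⁅x₂, x₁ ^ p⁆)
    (R : Subgroup F) (hR : R = (Subgroup.normalClosure {r}).topologicalClosure) :
    x₁ ^ p ∈ R ∧
    x₁ ^ p * r⁻¹ ∈
      (Subgroup.closure ({z : F | ∃ a ∈ R, z = a ^ p} ∪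
        {z : F | ∃ a ∈ R, ∃ b : F, z = ⁅a, b⁆})).topologicalClosure ∧
    (Subgroup.normalClosure {x₁ ^ p}).topologicalClosure = R :=
  stmt15_general p F x₁ x₂ r hr R hR
end

section
/- Let p be a prime, e = p^k, n ≥ 1, and η the homogeneous element η(x̃₁,...,x̃ₙ) = Σ_{i=1}^n x̃ᵢ^{⊗e} of degree e in the free associative F_p-algebra on x̃₁,...,x̃ₙ (i.e. in the degree-e part of the tensor algebra of F_p^n). Suppose B = (b_{ij}) is an n × m matrix over F_p of rank m such that η(Σ_j b_{1j} ỹⱼ, ..., Σ_j b_{nj} ỹⱼ) = 0 in the tensor algebra on ỹ₁,...,ỹ_m. Then for all s, t ∈ {1,...,m}, Σ_{i=1}^n b_{is}^{e−1} b_{it} = 0, i.e. C·B = 0 where C is the m × n matrix with entries c_{si} = b_{is}^{e−1}; consequently m ≤ n/2. -/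
/-!
Send `ỹⱼ` to the nilpotent `(e+1) × (e+1)` matrix whose superdiagonal is `(d₀ⱼ, …, d_{e-1,j})`.
Then `x̃ᵢ` goes to the superdiagonal matrix with entries `(B d₀)ᵢ, …, (B d_{e-1})ᵢ`, whose `e`-th
power has the product of these entries in its corner, so the relation `η(B ỹ) = 0` yields the
multilinear identity `∑ᵢ ∏ₗ (B dₗ)ᵢ = 0`. With `d₀ = ⋯ = d_{e-2} = v` and `d_{e-1} = eₜ` this says
that the vector `((B v)ᵢ^{e-1})ᵢ` is orthogonal to every column of `B`.

For the bound, pick `rank B` linearly independent rows of `B` and vectors `v_y` on which these rows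
evaluate to the standard basis. Since `e - 1 ≠ 0`, the vectors `((B v_y)ᵢ^{e-1})ᵢ` restrict to the
standard basis on the chosen rows, so they form a matrix `U` of rank `rank B` with `U B = 0`.
-/

open Finset Matrix

section Superdiagonal

variable {R : Type*} [CommRing R]

def superdiagonal (e : ℕ) : (ℕ → R) →ₗ[R] Matrix (Fin (e + 1)) (Fin (e + 1)) R where
  toFun d := Matrix.of fun i j => if (j : ℕ) = i + 1 then d i else 0
  map_add' d d' := by
    ext i j
    by_cases h : (j : ℕ) = i + 1 <;> simp [h]
  map_smul' c d := by
    ext i j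
    by_cases h : (j : ℕ) = i + 1 <;> simp [h]

lemma superdiagonal_apply (e : ℕ) (d : ℕ → R) (i j : Fin (e + 1)) :
    superdiagonal e d i j = if (j : ℕ) = i + 1 then d i else 0 :=
  rfl

lemma superdiagonal_pow_apply_zero (e : ℕ) (d : ℕ → R) (L : ℕ) (j : Fin (e + 1)) :
    (superdiagonal e d ^ L) 0 j = if (j : ℕ) = L then ∏ l ∈ range L, d l else 0 := by
  induction L generalizing j with
  | zero => by_cases h : j = 0 <;> simp [h, one_apply, eq_comm]
  | succ L ih =>
    rw [pow_succ, mul_apply]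
    simp only [ih, superdiagonal_apply, ite_mul, zero_mul, mul_ite, mul_zero]
    by_cases hj : (j : ℕ) = L + 1
    · have hL : L < e + 1 := by omega
      rw [Finset.sum_eq_single ⟨L, hL⟩ (fun r _ hr => by simp [Fin.ext_iff] at hr; simp [hr])
        (by simp)]
      simp [hj, prod_range_succ]
    · refine (Finset.sum_eq_zero fun r _ => ?_).trans (if_neg hj).symm
      by_cases hr : (r : ℕ) = L <;> simp [hr, hj]

lemma superdiagonal_pow_self_apply_zero_last (e : ℕ) (d : ℕ → R) :
    (superdiagonal e d ^ e) 0 (Fin.last e) = ∏ l ∈ range e, d l := by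
  simp [superdiagonal_pow_apply_zero]

end Superdiagonal

section LinearSubst

variable {R : Type*} [CommRing R] {ι κ : Type*} [Fintype ι] [Fintype κ]

def FreeAlgebra.linearSubst (B : Matrix ι κ R) : FreeAlgebra R ι →ₐ[R] FreeAlgebra R κ :=
  FreeAlgebra.lift R fun i => ∑ j, B i j • FreeAlgebra.ι R j

lemma sum_prod_mulVec_eq_zero_of_linearSubst {B : Matrix ι κ R} {e : ℕ}
    (h : FreeAlgebra.linearSubst B (∑ i, FreeAlgebra.ι R i ^ e) = 0) (d : ℕ → κ → R) :
    ∑ i, ∏ l ∈ range e, (B *ᵥ d l) i = 0 := by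
  let φ := FreeAlgebra.lift R fun j => superdiagonal e fun l => d l j
  have hgen : ∀ i, φ (FreeAlgebra.linearSubst B (FreeAlgebra.ι R i)) =
      superdiagonal e fun l => (B *ᵥ d l) i := by
    intro i
    have hlin : (fun l => (B *ᵥ d l) i) = ∑ j, B i j • fun l => d l j := by
      ext l
      simp [mulVec, dotProduct]
    simp [FreeAlgebra.linearSubst, φ, hlin]
  have hφ := congrArg (fun M => (φ M) 0 (Fin.last e)) h
  simpa [map_sum, map_pow, hgen, Matrix.sum_apply, superdiagonal_pow_self_apply_zero_last] using hφ

lemma vecMul_pow_mulVec_eq_zero_of_linearSubst {B : Matrix ι κ R} {q : ℕ}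
    (h : FreeAlgebra.linearSubst B (∑ i, FreeAlgebra.ι R i ^ (q + 1)) = 0) (v : κ → R) :
    (fun i => (B *ᵥ v) i ^ q) ᵥ* B = 0 := by
  classical
  ext t
  have key := sum_prod_mulVec_eq_zero_of_linearSubst h
    fun l => if l < q then v else Pi.single t 1
  simp only [prod_range_succ, lt_irrefl, if_false, mulVec_single_one] at key
  rw [Pi.zero_apply, ← key]
  refine Finset.sum_congr rfl fun i _ => ?_
  rw [Finset.prod_congr rfl fun l hl => by rw [if_pos (mem_range.mp hl)], prod_const, card_range]
  rfl

end LinearSubst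

namespace Matrix

variable {K : Type*} [Field K] {ι κ : Type*} [Fintype ι] [Fintype κ]

lemma mulVec_surjective_of_linearIndependent_row {A : Matrix ι κ K}
    (h : LinearIndependent K A.row) : Function.Surjective A.mulVec := by
  have hrange : LinearMap.range A.mulVecLin = ⊤ :=
    Submodule.eq_top_of_finrank_eq (by
      rw [← rank, h.rank_matrix, Module.finrank_fintype_fun_eq_card])
  exact LinearMap.range_eq_top.mp hrange

lemma two_mul_rank_le_of_vecMul_pow_mulVec_eq_zero (B : Matrix ι κ K) {q : ℕ} (hq : q ≠ 0)
    (h : ∀ v, (fun i => (B *ᵥ v) i ^ q) ᵥ* B = 0) : 2 * B.rank ≤ Fintype.card ι := by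
  classical
  obtain ⟨κ', a, ha, hspan, hli⟩ := exists_linearIndependent' K B.row
  have : Finite κ' := Finite.of_injective a ha
  let : Fintype κ' := Fintype.ofFinite κ'
  let A := B.submatrix a id
  have hrank : B.rank = Fintype.card κ' := by
    rw [← hli.rank_matrix (M := A), rank_eq_finrank_span_row, rank_eq_finrank_span_row, ← hspan]
    rfl
  choose w hw using fun y => mulVec_surjective_of_linearIndependent_row hli (Pi.single y 1)
  let U : Matrix κ' ι K := of fun y i => (B *ᵥ w y) i ^ q
  have hUB : U * B = 0 := by
    ext y t
    exact congrFun (h (w y)) t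
  have hUa : U.submatrix id a = 1 := by
    ext y x
    have hx : (B *ᵥ w y) (a x) = (Pi.single y 1 : κ' → K) x := congrFun (hw y) x
    rcases eq_or_ne x y with rfl | hxy
    · simp [U, hx]
    · simp [U, hx, hxy, hxy.symm, hq]
  have hU : Fintype.card κ' ≤ U.rank := by
    simpa [hUa] using rank_submatrix_le U id a
  have := rank_add_rank_le_card_of_mul_eq_zero hUB
  omega

end Matrix

theorem stmt16_general (p k e n m : ℕ) [Fact p.Prime] (hk : 1 ≤ k) (he : e = p ^ k)
    (B : Matrix (Fin n) (Fin m) (ZMod p))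
    (hrank : B.rank = m)
    (hsub : (FreeAlgebra.lift (ZMod p)
        (fun i : Fin n => ∑ j : Fin m, B i j • FreeAlgebra.ι (ZMod p) j))
        (∑ i : Fin n, FreeAlgebra.ι (ZMod p) i ^ e) = 0) :
    (∀ s t : Fin m, ∑ i : Fin n, B i s ^ (e - 1) * B i t = 0) ∧
    (Matrix.of (fun (s : Fin m) (i : Fin n) => B i s ^ (e - 1))) * B = 0 ∧
    2 * m ≤ n := by
  have he2 : 2 ≤ e := he ▸ (Fact.out : p.Prime).two_le.trans (Nat.le_self_pow (by omega) p)
  obtain ⟨q, rfl⟩ : ∃ q, e = q + 1 := ⟨e - 1, by omega⟩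
  have hvec := vecMul_pow_mulVec_eq_zero_of_linearSubst (B := B) hsub
  have hcol : ∀ s t, ∑ i, B i s ^ q * B i t = 0 := fun s t => by
    simpa [mulVec_single_one, vecMul, dotProduct] using congrFun (hvec (Pi.single s 1)) t
  refine ⟨by simpa using hcol, ?_, ?_⟩
  · ext s t
    simpa [mul_apply] using hcol s t
  · simpa [hrank] using B.two_mul_rank_le_of_vecMul_pow_mulVec_eq_zero (by omega) hvec

/-- Let `p` be prime, `e = p^k` (`k ≥ 1`), and consider the homogeneous element
`η = Σᵢ x̃ᵢ^e` of degree `e` in the free associative `𝔽_p`-algebra on `x̃₁,...,x̃ₙ`.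
If `B` is an `n × m` matrix over `𝔽_p` of rank `m` such that substituting
`x̃ᵢ ↦ Σⱼ b_{ij} ỹⱼ` kills `η` in the free algebra on `ỹ₁,...,ỹ_m`, then
`Σᵢ b_{is}^{e-1} b_{it} = 0` for all `s, t`, i.e. `C·B = 0` for the `m × n` matrix
`C` with `c_{si} = b_{is}^{e-1}`; consequently `m ≤ n/2`. -/
theorem stmt16 (p k e n m : ℕ) [Fact p.Prime] (hk : 1 ≤ k) (he : e = p ^ k)
    (hn : 1 ≤ n) (B : Matrix (Fin n) (Fin m) (ZMod p))
    (hrank : B.rank = m)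
    (hsub : (FreeAlgebra.lift (ZMod p)
        (fun i : Fin n => ∑ j : Fin m, B i j • FreeAlgebra.ι (ZMod p) j))
        (∑ i : Fin n, FreeAlgebra.ι (ZMod p) i ^ e) = 0) :
    (∀ s t : Fin m, ∑ i : Fin n, B i s ^ (e - 1) * B i t = 0) ∧
    (Matrix.of (fun (s : Fin m) (i : Fin n) => B i s ^ (e - 1))) * B = 0 ∧
    2 * m ≤ n :=
  stmt16_general p k e n m hk he B hrank hsub
end

section
/- Consequently, a pro-p group G with presentation G = ⟨x₁,...,xₙ | x₁^e x₂^e ⋯ xₙ^e = 1⟩ where e = p^k, k ≥ 1, admits no continuous surjective homomorphism onto a free pro-p group of rank m > n/2; i.e. the internal pro-p rank Ir_p(G) satisfies Ir_p(G) ≤ [n/2]. -/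
/-!
Let `π : H → 𝔽_p^m` be reduction mod `p` of the abelianization, sending `y_j` to the unit
vector `e_j`, and put `B_i = π (φ x_i)`; surjectivity of `φ` makes the `B_i` span `𝔽_p^m`.

Given linear forms `f_1, …, f_e` on `𝔽_p^m`, send `y_j` to the unitriangular matrix
`1 + ∑_s f_s(e_j) E_{s,s+1}` of size `e + 1` over `𝔽_p`; this group is a finite `p`-group, and
it realizes the Magnus expansion truncated in degree `e`. Writing `1 + A_i` for the image of
`φ x_i`, the first superdiagonal of `A_i` is `(f_s(B_i))_s`, and since `e` is a power of `p`
the relator maps to `∏ (1 + A_i^e) = 1 + ∑ A_i^e`. The corner entry of `∑ A_i^e` vanishes, and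
it is `∑_i ∏_s f_s(B_i)`.

Choose rows `B_{a_1}, …, B_{a_m}` forming a basis with dual basis `g_1, …, g_m`. Taking
`f = (w, g_t, …, g_t)` shows that each `c_t = (g_t(B_i)^{e-1})_i` lies in the kernel of
`(λ_i) ↦ ∑ λ_i B_i`, which has dimension `n - m`; as `c_t(a_s) = δ_{st}` and `e ≥ 2`, these
`m` vectors are independent, so `m ≤ n - m`.
-/

section ProP

variable {p : ℕ}

theorem IsPGroup.isProP [Fact p.Prime] {G : Type} [Group G] [TopologicalSpace G]
    [IsTopologicalGroup G] [DiscreteTopology G] [Finite G] (hG : IsPGroup p G) :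
    IsProP p G :=
  ⟨Finite.compactSpace, inferInstance, inferInstance, fun U _ _ => hG.index U⟩

theorem isPGroup_multiplicative (V : Type) [AddCommGroup V] [Module (ZMod p) V] :
    IsPGroup p (Multiplicative V) :=
  fun g => ⟨1, by
    simpa using congrArg Multiplicative.ofAdd (ZModModule.char_nsmul_eq_zero p g.toAdd)⟩

variable {F : Type} [Group F] [TopologicalSpace F] [IsTopologicalGroup F] {ι : Type} {x : ι → F}

theorem IsFreeProPOn.exists_continuous_hom (hF : IsFreeProPOn p F x) {Q : Type} [Group Q]
    [TopologicalSpace Q] [IsTopologicalGroup Q] (hQ : IsProP p Q) (q : ι → Q) :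
    ∃ f : F →* Q, Continuous f ∧ ∀ i, f (x i) = q i :=
  (hF.2 Q _ _ _ hQ q).exists

theorem IsFreeProPOn.hom_ext (hF : IsFreeProPOn p F x) {Q : Type} [Group Q]
    [TopologicalSpace Q] [IsTopologicalGroup Q] (hQ : IsProP p Q) {f g : F →* Q}
    (hf : Continuous f) (hg : Continuous g) (h : ∀ i, f (x i) = g (x i)) : f = g :=
  (hF.2 Q _ _ _ hQ (g ∘ x)).unique ⟨hf, h⟩ ⟨hg, fun _ => rfl⟩

theorem IsFreeProPOn.toAdd_mem_span [Fact p.Prime] (hF : IsFreeProPOn p F x) {V : Type}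
    [AddCommGroup V] [Module (ZMod p) V] [Finite V] [TopologicalSpace V] [DiscreteTopology V]
    (χ : F →* Multiplicative V) (hχ : Continuous χ) (g : F) :
    (χ g).toAdd ∈ Submodule.span (ZMod p) (Set.range fun i => (χ (x i)).toAdd) := by
  set S := Submodule.span (ZMod p) (Set.range fun i => (χ (x i)).toAdd)
  let _ : TopologicalSpace (Multiplicative (V ⧸ S)) := ⊥
  have : DiscreteTopology (Multiplicative (V ⧸ S)) := ⟨rfl⟩
  have : Finite (V ⧸ S) := Finite.of_surjective _ S.mkQ_surjective
  set mk := AddMonoidHom.toMultiplicative S.mkQ.toAddMonoidHom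
  have hq : mk.comp χ = 1 :=
    hF.hom_ext (isPGroup_multiplicative _).isProP
      ((continuous_of_discreteTopology (f := mk)).comp hχ)
      continuous_const fun i =>
        (Submodule.Quotient.mk_eq_zero S).2 (Submodule.subset_span ⟨i, rfl⟩)
  exact (Submodule.Quotient.mk_eq_zero S).1 (DFunLike.congr_fun hq g)

end ProP

namespace Matrix

variable {R : Type*} {n : ℕ}

def IsUpperFrom [Zero R] (d : ℕ) (A : Matrix (Fin n) (Fin n) R) : Prop :=
  ∀ i j : Fin n, (j : ℕ) < i + d → A i j = 0

section Ring

variable [Ring R] {A B : Matrix (Fin n) (Fin n) R} {d d' : ℕ}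

theorem IsUpperFrom.mono (hA : IsUpperFrom d A) (h : d' ≤ d) : IsUpperFrom d' A :=
  fun i j hij => hA i j (by omega)

theorem IsUpperFrom.add (hA : IsUpperFrom d A) (hB : IsUpperFrom d B) :
    IsUpperFrom d (A + B) := fun i j hij => by
  rw [add_apply, hA i j hij, hB i j hij, add_zero]

theorem IsUpperFrom.mul (hA : IsUpperFrom d A) (hB : IsUpperFrom d' B) :
    IsUpperFrom (d + d') (A * B) := fun i j hij => by
  rw [mul_apply]
  refine Finset.sum_eq_zero fun l _ => ?_
  by_cases hl : (l : ℕ) < i + d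
  · rw [hA i l hl, zero_mul]
  · rw [hB l j (by omega), mul_zero]

theorem IsUpperFrom.pow (hA : IsUpperFrom 1 A) (k : ℕ) : IsUpperFrom k (A ^ k) := by
  induction k with
  | zero => exact fun i j hij => by rw [pow_zero, one_apply_ne (by omega)]
  | succ k ih => exact pow_succ A k ▸ ih.mul hA

theorem IsUpperFrom.eq_zero (hA : IsUpperFrom n A) : A = 0 :=
  ext fun i j => hA i j (by omega)

end Ring

theorem IsUpperFrom.pow_apply [CommRing R] {A : Matrix (Fin n) (Fin n) R} (hA : IsUpperFrom 1 A)
    (i : Fin n) :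
    ∀ (k : ℕ) (j : Fin n) (hij : (j : ℕ) = i + k),
      (A ^ k) i j = ∏ s : Fin k, A ⟨i + s, by omega⟩ ⟨i + s + 1, by omega⟩
  | 0, j, hij => by
    obtain rfl : j = i := Fin.ext hij
    simp
  | k + 1, j, hij => by
    have hlt : (i : ℕ) + k + 1 < n := by omega
    obtain rfl : j = ⟨i + k + 1, hlt⟩ := Fin.ext (by omega)
    rw [pow_succ, mul_apply, Finset.sum_eq_single ⟨i + k, by omega⟩, Fin.prod_univ_castSucc,
      hA.pow_apply i k _ rfl]
    · rfl
    · intro l _ hl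
      by_cases hlk : (l : ℕ) < i + k
      · rw [(hA.pow k) i l hlk, zero_mul]
      · rw [hA l _ (by simp [Fin.ext_iff] at hl; omega), mul_zero]
    · simp

theorem IsUpperFrom.pow_apply_zero_last [CommRing R] {A : Matrix (Fin (n + 1)) (Fin (n + 1)) R}
    (hA : IsUpperFrom 1 A) : (A ^ n) 0 (Fin.last n) = ∏ s : Fin n, A s.castSucc s.succ := by
  rw [hA.pow_apply 0 n _ (by simp)]
  refine Finset.prod_congr rfl fun s _ => ?_
  congr 1 <;> ext <;> simp

theorem isUpperFrom_zero [Zero R] {d : ℕ} : IsUpperFrom d (0 : Matrix (Fin n) (Fin n) R) :=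
  fun _ _ _ => rfl

section Unipotent

variable [Ring R] {M N : Matrix (Fin n) (Fin n) R}

theorem IsUpperFrom.mul_sub_one (hM : IsUpperFrom 1 (M - 1)) (hN : IsUpperFrom 1 (N - 1)) :
    IsUpperFrom 1 (M * N - 1) := by
  rw [show M * N - 1 = (M - 1) + (N - 1) + (M - 1) * (N - 1) by noncomm_ring]
  exact (hM.add hN).add ((hM.mul hN).mono (by omega))

theorem IsUpperFrom.pow_sub_one (hM : IsUpperFrom 1 (M - 1)) (k : ℕ) :
    IsUpperFrom 1 (M ^ k - 1) := by
  induction k with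
  | zero => simpa using isUpperFrom_zero
  | succ k ih => exact pow_succ M k ▸ ih.mul_sub_one hM

theorem IsUpperFrom.mul_apply_eq_add (hM : IsUpperFrom 1 (M - 1))
    (hN : IsUpperFrom 1 (N - 1)) {i j : Fin n} (hij : (j : ℕ) = i + 1) :
    (M * N) i j = M i j + N i j := by
  have hne : i ≠ j := fun h => by simp [h] at hij
  rw [show M * N = 1 + (M - 1) + (N - 1) + (M - 1) * (N - 1) by noncomm_ring]
  simp [hM.mul hN i j (by omega), one_apply_ne hne]

theorem IsUpperFrom.pow_char_pow_eq_one [NeZero n] (p : ℕ) [Fact p.Prime] [CharP R p]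
    (hM : IsUpperFrom 1 (M - 1)) : M ^ p ^ n = 1 := by
  have hnil : (M - 1) ^ p ^ n = 0 :=
    ((hM.pow _).mono (Nat.lt_pow_self (Fact.out : p.Prime).one_lt).le).eq_zero
  calc M ^ p ^ n = (1 + (M - 1)) ^ p ^ n := by rw [add_sub_cancel]
    _ = 1 := by
      rw [add_pow_char_pow_of_commute _ _ (Commute.one_left _), one_pow, hnil, add_zero]

end Unipotent

def superdiagonal [Zero R] (d : Fin n → R) : Matrix (Fin (n + 1)) (Fin (n + 1)) R :=
  of fun a b => if h : (b : ℕ) = a + 1 then d ⟨a, by omega⟩ else 0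

theorem isUpperFrom_superdiagonal [Zero R] (d : Fin n → R) : IsUpperFrom 1 (superdiagonal d) :=
  fun _ _ h => dif_neg (by omega)

theorem superdiagonal_apply_castSucc_succ [Zero R] (d : Fin n → R) (s : Fin n) :
    superdiagonal d s.castSucc s.succ = d s :=
  dif_pos rfl

variable (p : ℕ) [Fact p.Prime]

def unitriangular (n : ℕ) [NeZero n] : Subgroup (Matrix (Fin n) (Fin n) (ZMod p))ˣ where
  carrier := {u | IsUpperFrom 1 ((u : Matrix (Fin n) (Fin n) (ZMod p)) - 1)}
  mul_mem' hu hv := hu.mul_sub_one hv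
  one_mem' := by simpa using isUpperFrom_zero
  inv_mem' {u} hu := by
    have hinv : ((u⁻¹ : (Matrix (Fin n) (Fin n) (ZMod p))ˣ) : Matrix (Fin n) (Fin n) (ZMod p)) =
        (u : Matrix (Fin n) (Fin n) (ZMod p)) ^ (p ^ n - 1) :=
      Units.inv_eq_of_mul_eq_one_right <| by
        rw [← pow_succ', Nat.sub_add_cancel (Nat.one_le_pow _ _ (Fact.out : p.Prime).pos),
          hu.pow_char_pow_eq_one p]
    show IsUpperFrom 1 (_ - 1)
    exact hinv ▸ hu.pow_sub_one _

namespace unitriangular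

variable {p}

theorem isPGroup [NeZero n] : IsPGroup p (unitriangular p n) :=
  fun u => ⟨n, Subtype.ext <| Units.ext <| by simpa using u.2.pow_char_pow_eq_one p⟩

def ofSuperdiagonal (d : Fin n → ZMod p) : unitriangular p (n + 1) :=
  have hd : IsUpperFrom 1 (1 + superdiagonal d - 1) := by simpa using isUpperFrom_superdiagonal d
  ⟨Units.ofPowEqOne _ _ (hd.pow_char_pow_eq_one p) (pow_ne_zero _ (Fact.out : p.Prime).ne_zero),
    hd⟩

def superdiagonalEntry (s : Fin n) : unitriangular p (n + 1) →* Multiplicative (ZMod p) where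
  toFun u := .ofAdd (u.1.1 s.castSucc s.succ)
  map_one' := by simp [one_apply_ne (Fin.castSucc_lt_succ (i := s)).ne]
  map_mul' u v := by
    rw [Subgroup.coe_mul, Units.val_mul, u.2.mul_apply_eq_add v.2 rfl, ofAdd_add]

theorem superdiagonalEntry_ofSuperdiagonal (d : Fin n → ZMod p) (s : Fin n) :
    superdiagonalEntry s (ofSuperdiagonal d) = .ofAdd (d s) := by
  simp [superdiagonalEntry, ofSuperdiagonal, superdiagonal_apply_castSucc_succ,
    one_apply_ne (Fin.castSucc_lt_succ (i := s)).ne]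

end unitriangular

end Matrix

theorem List.prod_map_one_add_of_mul_eq_zero {α R : Type*} [Ring R] (L : List α) (β : α → R)
    (hβ : ∀ a b, β a * β b = 0) :
    (L.map fun a => 1 + β a).prod = 1 + (L.map β).sum := by
  induction L with
  | nil => simp
  | cons a L ih =>
    have : β a * (L.map β).sum = 0 := by simp [← List.sum_map_mul_left, hβ]
    rw [List.map_cons, List.prod_cons, ih, List.map_cons, List.sum_cons, ← add_zero (β a + _),
      ← this]
    noncomm_ring

open Matrix in
theorem IsFreeProPOn.sum_prod_toAdd_eq_zero {p : ℕ} [Fact p.Prime] {H ι : Type} [Group H]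
    [TopologicalSpace H] [IsTopologicalGroup H] {y : ι → H} (hH : IsFreeProPOn p H y)
    {e k : ℕ} (he : e = p ^ k) (χ : Fin e → H →* Multiplicative (ZMod p))
    (hχ : ∀ s, Continuous (χ s)) (L : List H) (hL : (L.map (· ^ e)).prod = 1) :
    (L.map fun h => ∏ s, (χ s h).toAdd).sum = 0 := by
  let _ : TopologicalSpace (unitriangular p (e + 1)) := ⊥
  have : DiscreteTopology (unitriangular p (e + 1)) := ⟨rfl⟩
  obtain ⟨ψ, hψc, hψy⟩ := hH.exists_continuous_hom unitriangular.isPGroup.isProP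
    fun j => unitriangular.ofSuperdiagonal fun s => (χ s (y j)).toAdd
  have hentry : ∀ h s, (ψ h).1.1 s.castSucc s.succ = (χ s h).toAdd := fun h s => by
    have : (unitriangular.superdiagonalEntry s).comp ψ = χ s :=
      hH.hom_ext (isPGroup_multiplicative _).isProP
        ((continuous_of_discreteTopology (f := ⇑(unitriangular.superdiagonalEntry s))).comp hψc)
        (hχ s) fun j => by simp [hψy, unitriangular.superdiagonalEntry_ofSuperdiagonal]
    exact congrArg Multiplicative.toAdd (DFunLike.congr_fun this h)
  let ρ := (Units.coeHom _).comp ((unitriangular p (e + 1)).subtype.comp ψ)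
  let A h := ρ h - 1
  have he1 : 1 ≤ e := he ▸ Nat.one_le_pow _ _ (Fact.out : p.Prime).pos
  have hA : ∀ h, IsUpperFrom 1 (A h) := fun h => (ψ h).2
  have hfrob : ∀ h, ρ h ^ e = 1 + A h ^ e := fun h => by
    have := add_pow_char_pow_of_commute p k (Commute.one_left (A h))
    rwa [one_pow, ← he, add_sub_cancel] at this
  -- the relator maps to `∏ (1 + A h ^ e) = 1 + ∑ A h ^ e`, as `A h ^ e * A h' ^ e = 0`
  have hsum : (L.map fun h => A h ^ e).sum = 0 := by
    have hprod := map_list_prod ρ _ ▸ congrArg ρ hL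
    simp only [List.map_map, Function.comp_def, map_pow, hfrob, map_one] at hprod
    rwa [List.prod_map_one_add_of_mul_eq_zero _ _ fun a b => (((hA a).pow e).mul
      ((hA b).pow e)).mono (by omega) |>.eq_zero, add_eq_left] at hprod
  have hcorner : ∀ h, (A h ^ e) 0 (Fin.last e) = ∏ s, (χ s h).toAdd := fun h => by
    rw [(hA h).pow_apply_zero_last]
    refine Finset.prod_congr rfl fun s _ => ?_
    show (ρ h - 1) s.castSucc s.succ = _
    rw [← hentry, Matrix.sub_apply, one_apply_ne (Fin.castSucc_lt_succ (i := s)).ne, sub_zero]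
    rfl
  have := congrArg (entryAddMonoidHom (ZMod p) 0 (Fin.last e)) hsum
  rw [map_list_sum, List.map_map, map_zero] at this
  simpa [Function.comp_def, hcorner] using this

open Module Submodule in
theorem two_mul_finrank_le_card_of_sum_prod_eq_zero {K V ι : Type*} [Field K] [AddCommGroup V]
    [Module K V] [FiniteDimensional K V] [Fintype ι] {e : ℕ} (he : 2 ≤ e) (B : ι → V)
    (hB : span K (Set.range B) = ⊤)
    (h : ∀ f : Fin e → Dual K V, ∑ i, ∏ s, f s (B i) = 0) :
    2 * finrank K V ≤ Fintype.card ι := by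
  classical
  obtain ⟨e, rfl⟩ : ∃ e', e = e' + 1 := ⟨e - 1, by omega⟩
  obtain ⟨κ, a, -, hspan, hind⟩ := exists_linearIndependent' K B
  let b : Basis κ K V := Basis.mk hind (by rw [hspan, hB])
  have := FiniteDimensional.fintypeBasisIndex b
  let M := Fintype.linearCombination K B
  let c : κ → ι → K := fun t i => b.coord t (B i) ^ e
  have hc : ∀ t, c t ∈ LinearMap.ker M := by
    intro t
    rw [LinearMap.mem_ker, ← forall_dual_apply_eq_zero_iff K]
    intro w
    simpa [M, c, Fintype.linearCombination_apply, Fin.prod_univ_succ, mul_comm] using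
      h (Fin.cons w fun _ => b.coord t)
  have hc_apply : ∀ s t, c t (a s) = if s = t then 1 else 0 := by
    intro s t
    have hs : c t (a s) = b.coord t (b s) ^ e := by
      simp only [c, b, Basis.mk_apply, Function.comp_apply]
    rw [hs, Basis.coord_apply, Basis.repr_self, Finsupp.single_apply]
    split_ifs <;> simp [zero_pow (by omega : e ≠ 0)]
  have hind_c : LinearIndependent K fun t => (⟨c t, hc t⟩ : LinearMap.ker M) := by
    refine LinearIndependent.of_comp (LinearMap.ker M).subtype ?_
    rw [Fintype.linearIndependent_iff]
    intro g hg s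
    simpa [hc_apply] using congrFun hg (a s)
  have hM : LinearMap.range M = ⊤ := by rw [Fintype.range_linearCombination, hB]
  have hrank := LinearMap.finrank_range_add_finrank_ker M
  rw [hM, finrank_top, finrank_fintype_fun_eq_card] at hrank
  have := hind_c.fintype_card_le_finrank
  rw [← finrank_eq_card_basis b] at this
  omega

/-- The pro-`p` group `G = ⟨x₁,...,xₙ | x₁^e ⋯ xₙ^e = 1⟩` with `e = p^k`, `k ≥ 1`
(presented as `F/R` with `F` free pro-`p` on `x : Fin n → F` and `R` the closed
normal subgroup generated by the relator) admits no continuous surjection onto a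
free pro-`p` group of rank `m > n/2`: any continuous homomorphism `φ : F → H` onto
a free pro-`p` group of rank `m` killing `R` (i.e. factoring through `G`) forces
`2m ≤ n`, that is, `Ir_p(G) ≤ ⌊n/2⌋`. -/
theorem stmt17 (p k e n m : ℕ) (hp : p.Prime) (hk : 1 ≤ k) (he : e = p ^ k)
    (F : Type) [Group F] [TopologicalSpace F] [IsTopologicalGroup F]
    (x : Fin n → F) (hF : IsFreeProPOn p F x)
    (R : Subgroup F)
    (hR : R = (Subgroup.normalClosure
      {((List.finRange n).map (fun i => x i ^ e)).prod}).topologicalClosure)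
    (H : Type) [Group H] [TopologicalSpace H] [IsTopologicalGroup H]
    (y : Fin m → H) (hH : IsFreeProPOn p H y)
    (φ : F →* H) (hφR : ∀ g ∈ R, φ g = 1)
    (hφc : Continuous φ) (hφsurj : Function.Surjective φ) :
    2 * m ≤ n := by
  have := Fact.mk hp
  obtain ⟨π, hπc, hπy⟩ := hH.exists_continuous_hom (isPGroup_multiplicative _).isProP
    fun j => Multiplicative.ofAdd (Pi.single j (1 : ZMod p))
  let B i := (π (φ (x i))).toAdd
  have hB : Submodule.span (ZMod p) (Set.range B) = ⊤ := by
    refine eq_top_iff.2 <| (Pi.basisFun (ZMod p) (Fin m)).span_eq ▸ Submodule.span_le.2 ?_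
    rintro _ ⟨j, rfl⟩
    obtain ⟨g, hg⟩ := hφsurj (y j)
    simpa [hg, hπy] using hF.toAdd_mem_span (π.comp φ) (hπc.comp hφc) g
  have hrel : (((List.finRange n).map (φ ∘ x)).map (· ^ e)).prod = 1 := by
    have hr := hφR _ (hR ▸ Subgroup.le_topologicalClosure _
      (Subgroup.subset_normalClosure (Set.mem_singleton _)))
    simpa [map_list_prod, List.map_map, Function.comp_def] using hr
  have he2 : 2 ≤ e := he ▸ hp.two_le.trans (Nat.le_self_pow (by omega) p)
  have hform : ∀ f : Fin e → Module.Dual (ZMod p) (Fin m → ZMod p),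
      ∑ i, ∏ s, f s (B i) = 0 := by
    intro f
    let χ s := (AddMonoidHom.toMultiplicative (f s).toAddMonoidHom).comp π
    have hχ s : Continuous (χ s) := Continuous.comp
      (g := AddMonoidHom.toMultiplicative (f s).toAddMonoidHom) continuous_of_discreteTopology hπc
    simpa [Fin.sum_univ_def, Function.comp_def, χ, B] using
      hH.sum_prod_toAdd_eq_zero he χ hχ _ hrel
  simpa using two_mul_finrank_le_card_of_sum_prod_eq_zero he2 B hB hform
end
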